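/- Let D := (1/2)·[[−1,1,1,1],[1,−1,1,1],[1,1,−1,1],[1,1,1,−1]] (the duality operator). Then: (a) D = −Q_D; (b) D is symmetric and D² = I, so D = Dᵀ = D⁻¹; (c) Dᵀ·Q_D·D = Q_D, i.e. D ∈ Aut(Q_D); and (d) Dᵀ·S_i·D = S_iᵀ for each i ∈ {1,2,3,4}. Consequently the dual Apollonian group ⟨S_1ᵀ,S_2ᵀ,S_3ᵀ,S_4ᵀ⟩ is conjugate in Aut(Q_D) to the Apollonian group ⟨S_1,S_2,S_3,S_4⟩ via D. -/

import Mathlib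

/-!
`D = -Q_D`, and `Q_D` is a symmetric involution, so conjugation by `D` is conjugation by `Q_D`.
Each `S i = 1 - 4 eᵢeᵢᵀ Q_D` is the reflection in `eᵢ` for the Descartes form, and for any
symmetric involution `Q` and symmetric `M`, `Q (1 - M Q) Q = 1 - Q M = (1 - M Q)ᵀ`.
-/

open Matrix

/-- The matrix of the Descartes quadratic form: diagonal entries `1/2`,
off-diagonal entries `-1/2`. -/
noncomputable def QD : Matrix (Fin 4) (Fin 4) ℝ :=
  Matrix.of fun i j => if i = j then 1/2 else -1/2

/-- The Apollonian generators `S₁, S₂, S₃, S₄`. -/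
noncomputable def S : Fin 4 → Matrix (Fin 4) (Fin 4) ℝ := fun i =>
  Matrix.of fun j k =>
    if j = i then (if k = i then -1 else 2) else (if j = k then 1 else 0)

/-- The duality operator `D`. -/
noncomputable def Dop : Matrix (Fin 4) (Fin 4) ℝ :=
  (1/2 : ℝ) • !![-1, 1, 1, 1; 1, -1, 1, 1; 1, 1, -1, 1; 1, 1, 1, -1]

section Involution

variable {n R : Type*} [Fintype n] [DecidableEq n] [CommRing R] {Q : Matrix n n R}

theorem Matrix.mul_one_sub_mul_mul_of_mul_self_eq_one (hQ : Q * Q = 1) (M : Matrix n n R) :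
    Q * (1 - M * Q) * Q = 1 - Q * M := by
  simp only [Matrix.mul_sub, Matrix.sub_mul, Matrix.mul_one, hQ, Matrix.mul_assoc]

theorem Matrix.mul_one_sub_mul_mul_eq_transpose (hQ : Qᵀ = Q) (hQQ : Q * Q = 1)
    {M : Matrix n n R} (hM : Mᵀ = M) : Q * (1 - M * Q) * Q = (1 - M * Q)ᵀ := by
  rw [Matrix.mul_one_sub_mul_mul_of_mul_self_eq_one hQQ, transpose_sub, transpose_one,
    transpose_mul, hQ, hM]

end Involution

theorem QD_transpose : QDᵀ = QD := by
  ext i j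
  simp only [QD, transpose_apply, of_apply, eq_comm]

theorem QD_mul_self : QD * QD = 1 := by
  ext i j
  fin_cases i <;> fin_cases j <;> simp [QD, mul_apply, Fin.sum_univ_four, one_apply] <;> norm_num

theorem Dop_eq_neg_QD : Dop = -QD := by
  ext i j
  fin_cases i <;> fin_cases j <;> norm_num [Dop, QD]

theorem S_eq_one_sub_single_mul_QD (i : Fin 4) : S i = 1 - single i i 4 * QD := by
  ext j k
  by_cases hj : j = i
  · subst hj
    by_cases hk : k = j
    · simp [S, QD, hk]; norm_num
    · simp [S, QD, hk, Ne.symm hk]; norm_num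
  · simp [S, hj, one_apply]

/-- The duality operator `D = -Q_D` is a symmetric involution in `Aut(Q_D)`
conjugating each Apollonian generator `S i` to the dual generator `S iᵀ`;
hence the dual Apollonian group is conjugate to the Apollonian group in
`Aut(Q_D)` via `D`. -/
theorem duality_operator_conjugates :
    Dop = -QD ∧
    (Dopᵀ = Dop ∧ Dop * Dop = 1) ∧
    Dopᵀ * QD * Dop = QD ∧
    (∀ i : Fin 4, Dopᵀ * S i * Dop = (S i)ᵀ) := by
  have conj_eq (X : Matrix (Fin 4) (Fin 4) ℝ) : Dopᵀ * X * Dop = QD * X * QD := by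
    simp only [Dop_eq_neg_QD, transpose_neg, QD_transpose, neg_mul, Matrix.mul_neg, neg_neg]
  refine ⟨Dop_eq_neg_QD, ⟨?_, ?_⟩, ?_, fun i => ?_⟩
  · rw [Dop_eq_neg_QD, transpose_neg, QD_transpose]
  · rw [Dop_eq_neg_QD, neg_mul_neg, QD_mul_self]
  · rw [conj_eq, QD_mul_self, one_mul]
  · rw [conj_eq, S_eq_one_sub_single_mul_QD, Matrix.mul_one_sub_mul_mul_eq_transpose
      QD_transpose QD_mul_self (transpose_single i i 4)]
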